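/- Suppose v_1, …, v_k span ℝ^n (equivalently ker(φ) = 0). Let c ∈ ℤ^k with S̃_c ≠ ∅, let u ∈ S̃_c, let p = π(c), and let F_p be the minimal face of Z containing p. Then dim span(F_p − p) + dim span(S̃_c − u) = k − |J_c|, where dim denotes Module.finrank over ℝ. -/

import Mathlib

/-- The linear map `φ : ℝⁿ → ℝᵏ` given by pairing with the integer vectors `v j`. -/
noncomputable def phiMap {n k : ℕ} (v : Fin k → Fin n → ℤ) :
    (Fin n → ℝ) →ₗ[ℝ] (Fin k → ℝ) where
  toFun u := fun j => ∑ i, u i * (v j i : ℝ)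
  map_add' u w := by
    funext j
    simp [add_mul, Finset.sum_add_distrib]
  map_smul' r u := by
    funext j
    simp [Finset.mul_sum, mul_assoc]

/-- The map `Φ : ℝⁿ → ℤᵏ`, `Φ(u)_j = ⌈⟨u, v_j⟩⌉`. -/
noncomputable def PhiMap {n k : ℕ} (v : Fin k → Fin n → ℤ) (u : Fin n → ℝ) : Fin k → ℤ :=
  fun j => ⌈∑ i, u i * (v j i : ℝ)⌉

/-!
Write `U = {x ∈ ℝᵏ | x_j = 0 for j ∈ J_c}`. The stratum `S̃_c` is the preimage under `φ` of the box
`∏ (c_j - 1, c_j]`, and the points of the half-open cube over `p = π(c)` are exactly the `c - φ(y)`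
with `y ∈ S̃_c`. Averaging witnesses gives `u₀ ∈ S̃_c` with `⟨u₀, v_j⟩ < c_j` for all `j ∉ J_c`.
Near `u₀` the stratum fills a neighbourhood in `u₀ + φ⁻¹(U)`, so `span(S̃_c - u) = φ⁻¹(U)`.
Dually, every point of the cube over `p` vanishes on `J_c`, so the image of the face `{x_{J_c} = 0}`
of the cube is a face of `Z` through `p`, while `c - φ(u₀)` moves in every direction of `U` inside
the cube; hence `span(F_p - p) = π(U)`. Finally `π|_U` has kernel `U ∩ im φ ≅ φ⁻¹(U)` since `φ` is
injective, and rank–nullity gives `dim π(U) + dim φ⁻¹(U) = dim U = k - |J_c|`.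
-/

open Set Filter Topology Module

lemma eventually_forall_add_mul_mem {ι : Type*} [Finite ι] {I : ι → Set ℝ} {x w : ι → ℝ}
    (h : ∀ j, x j ∈ I j ∧ (w j = 0 ∨ I j ∈ 𝓝 (x j))) :
    ∀ᶠ t in 𝓝 (0 : ℝ), ∀ j, (x + t • w) j ∈ I j := by
  refine eventually_all.2 fun j => ?_
  obtain ⟨hx, hw | hI⟩ := h j
  · simp [hw, hx]
  · have hlim : Tendsto (fun t : ℝ => x j + t * w j) (𝓝 0) (𝓝 (x j)) :=
      (by fun_prop : Continuous fun t : ℝ => x j + t * w j).tendsto' 0 _ (by simp)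
    exact hlim hI

section ConvexGeometry

variable {E : Type*} [AddCommGroup E] [Module ℝ E]

lemma span_image_sub_eq_of_eventually {s : Set E} {x : E} {W : Submodule ℝ E}
    (hs : ∀ y ∈ s, y - x ∈ W) (hW : ∀ w ∈ W, ∀ᶠ t in 𝓝 (0 : ℝ), x + t • w ∈ s) :
    Submodule.span ℝ ((· - x) '' s) = W := by
  refine le_antisymm (Submodule.span_le.2 ?_) fun w hw => ?_
  · rintro _ ⟨y, hy, rfl⟩
    exact hs y hy
  obtain ⟨t, hts, ht⟩ :=
    ((eventually_nhdsWithin_of_eventually_nhds (hW w hw)).and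
      (self_mem_nhdsWithin : ∀ᶠ t in 𝓝[≠] (0 : ℝ), t ≠ 0)).exists
  have htw : t • w ∈ Submodule.span ℝ ((· - x) '' s) :=
    Submodule.subset_span ⟨x + t • w, hts, add_sub_cancel_left x _⟩
  simpa [smul_smul, inv_mul_cancel₀ ht] using Submodule.smul_mem _ t⁻¹ htw

lemma vectorSpan_setOf_forall_mem {ι : Type*} [Finite ι] (φ : E →ₗ[ℝ] ι → ℝ) {I : ι → Set ℝ}
    {J : Set ι} {u₀ : E} (hu₀ : ∀ j, φ u₀ j ∈ I j)
    (hJ : ∀ j ∈ J, ∀ y, (∀ i, φ y i ∈ I i) → φ y j = φ u₀ j)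
    (hint : ∀ j ∉ J, I j ∈ 𝓝 (φ u₀ j)) :
    vectorSpan ℝ {y | ∀ j, φ y j ∈ I j} = (Submodule.pi J fun _ => ⊥).comap φ := by
  rw [vectorSpan_eq_span_vsub_set_right ℝ (show u₀ ∈ {y | ∀ j, φ y j ∈ I j} from hu₀)]
  refine span_image_sub_eq_of_eventually (fun y hy j hj => ?_) fun d hd => ?_
  · simp [hJ j hj y hy]
  · have hd₀ : ∀ j ∈ J, φ d j = 0 := fun j hj => hd j hj
    filter_upwards [eventually_forall_add_mul_mem fun j =>
      ⟨hu₀ j, (em (j ∈ J)).imp (hd₀ j) (hint j)⟩] with t ht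
    show ∀ j, φ (u₀ + t • d) j ∈ I j
    rwa [map_add, map_smul]

lemma add_mem_sInter_isExtreme {A : Set E} {p w : E} (h₁ : p - w ∈ A) (h₂ : p + w ∈ A) :
    p + w ∈ ⋂₀ {F | IsExtreme ℝ A F ∧ p ∈ F} := by
  refine mem_sInter.2 fun F ⟨hF, hpF⟩ => hF.left_mem_of_mem_openSegment h₂ h₁ hpF ?_
  exact ⟨1 / 2, 1 / 2, by norm_num, by norm_num, by norm_num, by module⟩

lemma isExtreme_setOf_forall_eq_zero {ι : Type*} {C : Set (ι → ℝ)} (hC : ∀ x ∈ C, 0 ≤ x)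
    (J : Set ι) : IsExtreme ℝ C {x ∈ C | ∀ j ∈ J, x j = 0} := by
  refine ⟨sep_subset _ _, ?_⟩
  rintro a ha b hb x ⟨-, hx⟩ ⟨α, β, hα, hβ, -, hxab⟩
  refine ⟨ha, fun j hj => ?_⟩
  have hsum : α * a j + β * b j = 0 := by simpa [← hxab] using hx j hj
  have ha₀ : 0 ≤ a j := hC a ha j
  have hb₀ : 0 ≤ b j := hC b hb j
  nlinarith

lemma isExtreme_setOf_image_fiber_subset {F : Type*} [AddCommGroup F] [Module ℝ F]
    {C G : Set E} (hC : Convex ℝ C) (hG : IsExtreme ℝ C G) (π : E →ₗ[ℝ] F) :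
    IsExtreme ℝ (π '' C) {z ∈ π '' C | ∀ x ∈ C, π x = z → x ∈ G} := by
  refine ⟨sep_subset _ _, ?_⟩
  rintro _ ⟨s, hs, rfl⟩ _ ⟨t, ht, rfl⟩ z ⟨-, hzG⟩ ⟨α, β, hα, hβ, hαβ, rfl⟩
  refine ⟨⟨s, hs, rfl⟩, fun s' hs' hs's => ?_⟩
  have hmid : α • s' + β • t ∈ G :=
    hzG _ (hC hs' ht hα.le hβ.le hαβ) (by rw [map_add, map_smul, map_smul, hs's])
  exact hG.left_mem_of_mem_openSegment hs' ht hmid ⟨α, β, hα, hβ, hαβ, rfl⟩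

lemma span_sub_sInter_isExtreme_image {ι : Type*} [Finite ι] {Q : Type*} [AddCommGroup Q]
    [Module ℝ Q] (π : (ι → ℝ) →ₗ[ℝ] Q) {I : ι → Set ℝ} (hI : ∀ j, Convex ℝ (I j))
    (hI₀ : ∀ j, I j ⊆ Ici 0) {J : Set ι} {x₀ : ι → ℝ} {p : Q} (hx₀ : ∀ j, x₀ j ∈ I j)
    (hp : π x₀ = p) (hfib : ∀ x, (∀ j, x j ∈ I j) → π x = p → ∀ j ∈ J, x j = 0)
    (hint : ∀ j ∉ J, I j ∈ 𝓝 (x₀ j)) :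
    Submodule.span ℝ ((· - p) '' ⋂₀ {F | IsExtreme ℝ (π '' {x | ∀ j, x j ∈ I j}) F ∧ p ∈ F}) =
      (Submodule.pi J fun _ => ⊥).map π := by
  subst hp
  set C := {x : ι → ℝ | ∀ j, x j ∈ I j}
  have hC : Convex ℝ C := fun x hx y hy a b ha hb hab j =>
    hI j (hx j) (hy j) ha hb hab
  have hF₀ := isExtreme_setOf_image_fiber_subset hC
    (isExtreme_setOf_forall_eq_zero (C := C) (fun x hx j => hI₀ j (hx j)) J) π
  have hpF₀ : π x₀ ∈ {z ∈ π '' C | ∀ x ∈ C, π x = z → x ∈ {x ∈ C | ∀ j ∈ J, x j = 0}} :=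
    ⟨⟨x₀, hx₀, rfl⟩, fun x hx hxp => ⟨hx, hfib x hx hxp⟩⟩
  have hsub : ⋂₀ {F | IsExtreme ℝ (π '' C) F ∧ π x₀ ∈ F} ⊆ _ :=
    sInter_subset_of_mem ⟨hF₀, hpF₀⟩
  refine span_image_sub_eq_of_eventually (fun z hz => ?_) ?_
  · obtain ⟨⟨x, hx, rfl⟩, hxG⟩ := hsub hz
    refine ⟨x - x₀, fun j hj => ?_, map_sub π x x₀⟩
    simp [(hxG x hx rfl).2 j hj, hfib x₀ hx₀ rfl j hj]
  · rintro _ ⟨w, hw, rfl⟩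
    have hmem : ∀ w' : ι → ℝ, (∀ j ∈ J, w' j = 0) → ∀ᶠ t in 𝓝 (0 : ℝ), x₀ + t • w' ∈ C :=
      fun w' hw' => eventually_forall_add_mul_mem fun j =>
        ⟨hx₀ j, (em (j ∈ J)).imp (hw' j) (hint j)⟩
    have hw₀ : ∀ j ∈ J, w j = 0 := fun j hj => hw j hj
    filter_upwards [hmem w hw₀, hmem (-w) fun j hj => by simp [hw₀ j hj]] with t hplus hminus
    rw [← map_smul]
    refine add_mem_sInter_isExtreme ⟨_, hminus, ?_⟩ ⟨_, hplus, by rw [map_add]⟩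
    rw [smul_neg, map_add, map_neg, ← sub_eq_add_neg]

lemma Convex.exists_forall_lt {ι : Type*} {S : Set E} (hS : Convex ℝ S) (hne : S.Nonempty)
    {f : ι → E → ℝ} (hf : ∀ i, ConvexOn ℝ S (f i)) {b : ι → ℝ}
    (hle : ∀ i, ∀ y ∈ S, f i y ≤ b i) (s : Finset ι) (hs : ∀ i ∈ s, ∃ y ∈ S, f i y < b i) :
    ∃ y ∈ S, ∀ i ∈ s, f i y < b i := by
  classical
  induction s using Finset.induction_on with
  | empty =>
    obtain ⟨y, hy⟩ := hne
    exact ⟨y, hy, by simp⟩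
  | insert i s _ ih =>
    obtain ⟨y, hy, hys⟩ := ih fun j hj => hs j (Finset.mem_insert_of_mem hj)
    obtain ⟨y', hy', hy'i⟩ := hs i (Finset.mem_insert_self i s)
    have hmid : ∀ j, f j ((1 / 2 : ℝ) • y + (1 / 2 : ℝ) • y') ≤ 1 / 2 * f j y + 1 / 2 * f j y' :=
      fun j => (hf j).2 hy hy' (by norm_num) (by norm_num) (by norm_num)
    have hmidS : (1 / 2 : ℝ) • y + (1 / 2 : ℝ) • y' ∈ S :=
      hS hy hy' (by norm_num) (by norm_num) (by norm_num)
    refine ⟨_, hmidS, ?_⟩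
    simp only [Finset.mem_insert, forall_eq_or_imp]
    exact ⟨by linarith [hmid i, hle i y hy],
      fun j hj => by linarith [hmid j, hys j hj, hle j y' hy']⟩

end ConvexGeometry

lemma finrank_map_mkQ_add_finrank_comap {V W : Type*} [AddCommGroup V] [Module ℝ V]
    [AddCommGroup W] [Module ℝ W] [FiniteDimensional ℝ W] {φ : V →ₗ[ℝ] W}
    (hφ : Function.Injective φ) (U : Submodule ℝ W) :
    finrank ℝ (U.map (LinearMap.range φ).mkQ) + finrank ℝ (U.comap φ) = finrank ℝ U := by
  let f := (LinearMap.range φ).mkQ ∘ₗ U.subtype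
  have hrange : LinearMap.range f = U.map (LinearMap.range φ).mkQ := by
    rw [LinearMap.range_comp, Submodule.range_subtype]
  have hker : finrank ℝ (LinearMap.ker f) = finrank ℝ ↥(U ⊓ LinearMap.range φ) := by
    rw [LinearMap.ker_comp, Submodule.ker_mkQ, ← Submodule.map_comap_subtype]
    exact (Submodule.equivMapOfInjective _ U.injective_subtype _).finrank_eq
  have hcomap : finrank ℝ (U.comap φ) = finrank ℝ ↥(U ⊓ LinearMap.range φ) := by
    rw [inf_comm, ← Submodule.map_comap_eq]
    exact (Submodule.equivMapOfInjective φ hφ _).finrank_eq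
  rw [← hrange, hcomap, ← hker, f.finrank_range_add_finrank_ker]

lemma finrank_pi_bot_add_ncard {ι : Type*} [Fintype ι] (J : Set ι) :
    finrank ℝ (Submodule.pi J fun _ => (⊥ : Submodule ℝ ℝ)) + J.ncard = Fintype.card ι := by
  classical
  let f := LinearMap.funLeft ℝ ℝ ((↑) : J → ι)
  have hker : LinearMap.ker f = Submodule.pi J fun _ => ⊥ := by
    ext x
    simp [f, funext_iff]
  have hrange : LinearMap.range f = ⊤ :=
    LinearMap.range_eq_top.2 (LinearMap.funLeft_surjective_of_injective _ _ _ Subtype.val_injective)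
  rw [← hker, add_comm, ← Nat.card_coe_set_eq, Nat.card_eq_fintype_card,
    ← finrank_fintype_fun_eq_card ℝ, ← finrank_top ℝ (J → ℝ), ← hrange,
    f.finrank_range_add_finrank_ker, finrank_fintype_fun_eq_card]

lemma eq_zero_of_forall_dotProduct_eq_zero {m ι : Type*} [Fintype m] {w : ι → m → ℝ}
    (hw : Submodule.span ℝ (range w) = ⊤) {y : m → ℝ} (hy : ∀ j, y ⬝ᵥ w j = 0) : y = 0 := by
  have hspan : ∀ z ∈ Submodule.span ℝ (range w), y ⬝ᵥ z = 0 := fun z hz => by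
    induction hz using Submodule.span_induction with
    | mem _ hz => obtain ⟨j, rfl⟩ := hz; exact hy j
    | zero => exact dotProduct_zero y
    | add _ _ _ _ h₁ h₂ => rw [dotProduct_add, h₁, h₂, add_zero]
    | smul a _ _ h => rw [dotProduct_smul, h, smul_zero]
  exact dotProduct_self_eq_zero.1 (hspan y (hw ▸ Submodule.mem_top))

section Stratum

variable {n k : ℕ} (v : Fin k → Fin n → ℤ) (c : Fin k → ℤ)

lemma PhiMap_eq_iff {y : Fin n → ℝ} :
    PhiMap v y = c ↔ ∀ j, phiMap v y j ∈ Ioc ((c j : ℝ) - 1) (c j) :=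
  funext_iff.trans (forall_congr' fun _ => Int.ceil_eq_iff)

lemma exists_intCast_eq_iff {y : Fin n → ℝ} (hy : PhiMap v y = c) (j : Fin k) :
    (∃ m : ℤ, phiMap v y j = m) ↔ phiMap v y j = c j := by
  refine ⟨fun ⟨m, hm⟩ => ?_, fun h => ⟨c j, h⟩⟩
  have hceil : ⌈phiMap v y j⌉ = c j := congrFun hy j
  rw [hm, Int.ceil_intCast] at hceil
  rw [hm, hceil]

lemma phiMap_injective (hspan : Submodule.span ℝ (range fun j i => (v j i : ℝ)) = ⊤) :
    Function.Injective (phiMap v) :=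
  (injective_iff_map_eq_zero _).2 fun _ hy =>
    eq_zero_of_forall_dotProduct_eq_zero hspan fun j => congrFun hy j

lemma exists_PhiMap_eq_forall_lt {J : Set (Fin k)}
    (hJ : ∀ j ∉ J, ∃ y, PhiMap v y = c ∧ phiMap v y j < c j) {u : Fin n → ℝ}
    (hu : PhiMap v u = c) : ∃ u₀, PhiMap v u₀ = c ∧ ∀ j ∉ J, phiMap v u₀ j < c j := by
  classical
  have hS : {y | PhiMap v y = c} = phiMap v ⁻¹' univ.pi fun j => Ioc ((c j : ℝ) - 1) (c j) := by
    ext y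
    simp [PhiMap_eq_iff]
  have hconv : Convex ℝ {y | PhiMap v y = c} :=
    hS ▸ (convex_pi fun j _ => convex_Ioc _ _).linear_preimage _
  obtain ⟨u₀, hu₀, hlt⟩ := hconv.exists_forall_lt ⟨u, hu⟩ (f := fun j y => phiMap v y j)
    (fun j => (LinearMap.proj j ∘ₗ phiMap v).convexOn hconv) (b := fun j => c j)
    (fun j _ hy => ((PhiMap_eq_iff v c).1 hy j).2) (Finset.univ.filter (· ∉ J)) (by simpa using hJ)
  exact ⟨u₀, hu₀, fun j hj => hlt j (by simpa using hj)⟩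

lemma exists_PhiMap_eq_of_mkQ_eq {x : Fin k → ℝ} (hx : ∀ j, x j ∈ Ico (0 : ℝ) 1)
    (hxc : (LinearMap.range (phiMap v)).mkQ x =
      (LinearMap.range (phiMap v)).mkQ fun j => (c j : ℝ)) :
    ∃ y, PhiMap v y = c ∧ x = (fun j => (c j : ℝ)) - phiMap v y := by
  obtain ⟨w, hw⟩ : x - (fun j => (c j : ℝ)) ∈ LinearMap.range (phiMap v) :=
    (Submodule.Quotient.eq _).1 hxc
  refine ⟨-w, (PhiMap_eq_iff v c).2 fun j => ?_, by rw [map_neg, hw]; abel⟩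
  have hwj := congrFun hw j
  have hxj := hx j
  simp only [Pi.sub_apply, mem_Ico] at hwj hxj
  simp only [map_neg, Pi.neg_apply, hwj, mem_Ioc]
  constructor <;> linarith

lemma vectorSpan_setOf_PhiMap_eq {J : Set (Fin k)}
    (hJ : ∀ j ∈ J, ∀ y, PhiMap v y = c → phiMap v y j = c j) {u₀ : Fin n → ℝ}
    (hu₀ : PhiMap v u₀ = c) (hlt : ∀ j ∉ J, phiMap v u₀ j < c j) :
    vectorSpan ℝ {y | PhiMap v y = c} = (Submodule.pi J fun _ => ⊥).comap (phiMap v) := by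
  have hbox := (PhiMap_eq_iff v c).1 hu₀
  rw [show {y | PhiMap v y = c} = {y | ∀ j, phiMap v y j ∈ Ioc ((c j : ℝ) - 1) (c j)} from
    Set.ext fun _ => PhiMap_eq_iff v c]
  refine vectorSpan_setOf_forall_mem _ hbox (fun j hj y hy => ?_) fun j hj =>
    Ioc_mem_nhds (hbox j).1 (hlt j hj)
  rw [hJ j hj y ((PhiMap_eq_iff v c).2 hy), hJ j hj u₀ hu₀]

lemma span_sub_sInter_isExtreme_halfOpenCube {J : Set (Fin k)}
    (hJ : ∀ j ∈ J, ∀ y, PhiMap v y = c → phiMap v y j = c j) {u₀ : Fin n → ℝ}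
    (hu₀ : PhiMap v u₀ = c) (hlt : ∀ j ∉ J, phiMap v u₀ j < c j) :
    let π := (LinearMap.range (phiMap v)).mkQ
    let p := π fun j => (c j : ℝ)
    Submodule.span ℝ ((· - p) ''
        ⋂₀ {F | IsExtreme ℝ (π '' {x : Fin k → ℝ | ∀ j, x j ∈ Ico (0 : ℝ) 1}) F ∧ p ∈ F}) =
      (Submodule.pi J fun _ => ⊥).map π := by
  intro π p
  have hbox := (PhiMap_eq_iff v c).1 hu₀
  refine span_sub_sInter_isExtreme_image π (fun _ => convex_Ico 0 1)
    (fun _ => Ico_subset_Ici_self) (x₀ := (fun j => (c j : ℝ)) - phiMap v u₀)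
    (fun j => ?_) ?_ (fun x hx hxc j hj => ?_) fun j hj => ?_
  · obtain ⟨h₁, h₂⟩ := hbox j
    simp only [Pi.sub_apply, mem_Ico, sub_nonneg]
    constructor <;> linarith
  · rw [map_sub, sub_eq_self]
    exact (Submodule.Quotient.mk_eq_zero _).2 (LinearMap.mem_range_self _ _)
  · obtain ⟨y, hy, rfl⟩ := exists_PhiMap_eq_of_mkQ_eq v c hx hxc
    simp [hJ j hj y hy]
  · simp only [Pi.sub_apply]
    exact Ico_mem_nhds (by linarith [hlt j hj]) (by linarith [(hbox j).1])

end Stratum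

theorem stmt15_general {n k : ℕ} (v : Fin k → Fin n → ℤ)
    (hspan : Submodule.span ℝ (Set.range fun j => fun i => ((v j i : ℝ))) = ⊤)
    (c : Fin k → ℤ)
    (u : Fin n → ℝ) (hu : PhiMap v u = c) :
    let π := (LinearMap.range (phiMap v)).mkQ
    let Z := π '' {x : Fin k → ℝ | ∀ j, x j ∈ Set.Ico (0 : ℝ) 1}
    let p := π (fun j => (c j : ℝ))
    let Fp := ⋂₀ {F : Set ((Fin k → ℝ) ⧸ LinearMap.range (phiMap v)) |
      IsExtreme ℝ Z F ∧ p ∈ F}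
    let J : Set (Fin k) :=
      {j | ∀ y ∈ {y : Fin n → ℝ | PhiMap v y = c}, ∃ m : ℤ, phiMap v y j = (m : ℝ)}
    Module.finrank ℝ ↥(Submodule.span ℝ ((fun x => x - p) '' Fp)) +
      Module.finrank ℝ
        ↥(Submodule.span ℝ ((fun s => s - u) '' {y : Fin n → ℝ | PhiMap v y = c})) =
    k - J.ncard := by
  intro π Z p Fp J
  have hJ : ∀ j ∈ J, ∀ y, PhiMap v y = c → phiMap v y j = c j :=
    fun j hj y hy => (exists_intCast_eq_iff v c hy j).1 (hj y hy)
  have hnotJ : ∀ j ∉ J, ∃ y, PhiMap v y = c ∧ phiMap v y j < c j := fun j hj => by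
    obtain ⟨y, hy, hyj⟩ := not_forall₂.1 hj
    exact ⟨y, hy, ((PhiMap_eq_iff v c).1 hy j).2.lt_of_ne fun h => hyj ⟨c j, h⟩⟩
  obtain ⟨u₀, hu₀, hlt⟩ := exists_PhiMap_eq_forall_lt v c hnotJ hu
  have hface : Submodule.span ℝ ((fun x => x - p) '' Fp) = (Submodule.pi J fun _ => ⊥).map π :=
    span_sub_sInter_isExtreme_halfOpenCube v c hJ hu₀ hlt
  have hstratum : Submodule.span ℝ ((fun s => s - u) '' {y : Fin n → ℝ | PhiMap v y = c}) =
      (Submodule.pi J fun _ => ⊥).comap (phiMap v) :=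
    (vectorSpan_eq_span_vsub_set_right ℝ (show u ∈ {y | PhiMap v y = c} from hu)).symm.trans
      (vectorSpan_setOf_PhiMap_eq v c hJ hu₀ hlt)
  rw [hface, hstratum, finrank_map_mkQ_add_finrank_comap (phiMap_injective v hspan)]
  have hdim := finrank_pi_bot_add_ncard J
  rw [Fintype.card_fin] at hdim
  omega

/-- If `v_1, …, v_k` span `ℝⁿ`, then `dim F_p + dim S = k − |J_c|`, where `F_p` is the minimal
face of the half-open zonotope `Z` containing `p = π(c)` and `S̃_c` is the lifted stratum
containing `u`. -/
theorem stmt15 {n k : ℕ} (v : Fin k → Fin n → ℤ)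
    (hspan : Submodule.span ℝ (Set.range fun j => fun i => ((v j i : ℝ))) = ⊤)
    (c : Fin k → ℤ) (hc : ({y : Fin n → ℝ | PhiMap v y = c}).Nonempty)
    (u : Fin n → ℝ) (hu : PhiMap v u = c) :
    let π := (LinearMap.range (phiMap v)).mkQ
    let Z := π '' {x : Fin k → ℝ | ∀ j, x j ∈ Set.Ico (0 : ℝ) 1}
    let p := π (fun j => (c j : ℝ))
    let Fp := ⋂₀ {F : Set ((Fin k → ℝ) ⧸ LinearMap.range (phiMap v)) |
      IsExtreme ℝ Z F ∧ p ∈ F}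
    let J : Set (Fin k) :=
      {j | ∀ y ∈ {y : Fin n → ℝ | PhiMap v y = c}, ∃ m : ℤ, phiMap v y j = (m : ℝ)}
    Module.finrank ℝ ↥(Submodule.span ℝ ((fun x => x - p) '' Fp)) +
      Module.finrank ℝ
        ↥(Submodule.span ℝ ((fun s => s - u) '' {y : Fin n → ℝ | PhiMap v y = c})) =
    k - J.ncard :=
  stmt15_general v hspan c u hu
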